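/- arXiv:2305.01053 — 3 statements merged into one kernel-verified Lean document; each statement's English description precedes it below -/
import Mathlib

section
/- CV@R is subadditive (convex as a risk measure): for integrable random variables z₁, z₂ on the same probability space and α ∈ (0,1], CV@Rᵅ[z₁ + z₂] ≤ CV@Rᵅ[z₁] + CV@Rᵅ[z₂]. -/
open MeasureTheory Real

noncomputable def CVaR {Ω : Type*} [MeasurableSpace Ω] (μ : Measure Ω)
    (α : ℝ) (z : Ω → ℝ) : ℝ :=
  ⨅ t : ℝ, t + α⁻¹ * ∫ ω, max (z ω - t) 0 ∂μ

theorem cvar_subadditive {Ω : Type*} [MeasurableSpace Ω]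
    (μ : Measure Ω) [IsProbabilityMeasure μ] (z₁ z₂ : Ω → ℝ)
    (h₁ : Integrable z₁ μ) (h₂ : Integrable z₂ μ) (α : ℝ) (hα : 0 < α)
    (hα1 : α ≤ 1) :
    CVaR μ α (fun ω => z₁ ω + z₂ ω) ≤ CVaR μ α z₁ + CVaR μ α z₂ := by
  have hαinv : (1:ℝ) ≤ α⁻¹ := (one_le_inv_iff₀.mpr ⟨hα, hα1⟩ : (1:ℝ) ≤ α⁻¹)
  have hbdd : ∀ (z : Ω → ℝ), Integrable z μ →
      BddBelow (Set.range fun t : ℝ => t + α⁻¹ * ∫ ω, max (z ω - t) 0 ∂μ) := by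
    intro z hz
    refine ⟨∫ ω, z ω ∂μ, ?_⟩
    rintro _ ⟨t, rfl⟩
    have hint : Integrable (fun ω => max (z ω - t) 0) μ :=
      (hz.sub (integrable_const t)).pos_part
    have h0 : 0 ≤ ∫ ω, max (z ω - t) 0 ∂μ :=
      integral_nonneg fun ω => le_max_right _ _
    have hmono : ∫ ω, (z ω - t) ∂μ ≤ ∫ ω, max (z ω - t) 0 ∂μ :=
      integral_mono (hz.sub (integrable_const t)) hint fun ω => le_max_left _ _
    have hsub : ∫ ω, (z ω - t) ∂μ = (∫ ω, z ω ∂μ) - t := by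
      rw [integral_sub hz (integrable_const t), integral_const]
      simp
    have : (∫ ω, z ω ∂μ) - t ≤ α⁻¹ * ∫ ω, max (z ω - t) 0 ∂μ := by
      calc (∫ ω, z ω ∂μ) - t ≤ ∫ ω, max (z ω - t) 0 ∂μ := by rw [← hsub]; exact hmono
        _ ≤ α⁻¹ * ∫ ω, max (z ω - t) 0 ∂μ := le_mul_of_one_le_left h0 hαinv
    linarith
  refine le_ciInf_add_ciInf fun t₁ t₂ => ?_
  have hle : CVaR μ α (fun ω => z₁ ω + z₂ ω) ≤
      (t₁ + t₂) + α⁻¹ * ∫ ω, max (z₁ ω + z₂ ω - (t₁ + t₂)) 0 ∂μ :=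
    ciInf_le (hbdd _ (h₁.add h₂)) (t₁ + t₂)
  have hint₁ : Integrable (fun ω => max (z₁ ω - t₁) 0) μ :=
    (h₁.sub (integrable_const t₁)).pos_part
  have hint₂ : Integrable (fun ω => max (z₂ ω - t₂) 0) μ :=
    (h₂.sub (integrable_const t₂)).pos_part
  have hptw : ∀ ω, max (z₁ ω + z₂ ω - (t₁ + t₂)) 0 ≤
      max (z₁ ω - t₁) 0 + max (z₂ ω - t₂) 0 := by
    intro ω
    have h := max_add_add_le_max_add_max (a := z₁ ω - t₁) (c := (0:ℝ))
      (b := z₂ ω - t₂) (d := (0:ℝ))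
    rw [add_zero] at h
    calc max (z₁ ω + z₂ ω - (t₁ + t₂)) 0 = max ((z₁ ω - t₁) + (z₂ ω - t₂)) 0 := by ring_nf
      _ ≤ _ := h
  have hIm : ∫ ω, max (z₁ ω + z₂ ω - (t₁ + t₂)) 0 ∂μ ≤
      (∫ ω, max (z₁ ω - t₁) 0 ∂μ) + ∫ ω, max (z₂ ω - t₂) 0 ∂μ := by
    rw [← integral_add hint₁ hint₂]
    exact integral_mono ((h₁.add h₂).sub (integrable_const (t₁+t₂))).pos_part
      (hint₁.add hint₂) hptw
  have hαinv0 : (0:ℝ) ≤ α⁻¹ := by positivity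
  calc CVaR μ α (fun ω => z₁ ω + z₂ ω)
      ≤ (t₁ + t₂) + α⁻¹ * ∫ ω, max (z₁ ω + z₂ ω - (t₁ + t₂)) 0 ∂μ := hle
    _ ≤ (t₁ + t₂) + α⁻¹ * ((∫ ω, max (z₁ ω - t₁) 0 ∂μ) + ∫ ω, max (z₂ ω - t₂) 0 ∂μ) := by
        have := mul_le_mul_of_nonneg_left hIm hαinv0
        linarith
    _ = (t₁ + α⁻¹ * ∫ ω, max (z₁ ω - t₁) 0 ∂μ) + (t₂ + α⁻¹ * ∫ ω, max (z₂ ω - t₂) 0 ∂μ) := by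
        ring
end

section
/- For fixed h > 0, σ² > 0, λ > 0, μ > 0, α ∈ (0,1], t ∈ ℝ, the function F(p) = −μ·p − (λ/α)·( t − log(1 + h·p/σ²) )₊ on p ≥ 0 attains its supremum at p* = [λ/(μα) − σ²/h]₊ when λ/(μα·e^t) − σ²/h < 0, and at p* = σ²(e^t − 1)/h when λ/(μα·e^t) − σ²/h ≥ 0. -/
/-!
With `c = λ / α`, the bound `log x - log y ≤ (x - y) / y` gives
`(t - log y)₊ - θ (x - y) / y ≤ (t - log x)₊` for every weight `θ ∈ [0, 1]` with
`θ (t - log y) = (t - log y)₊`, so the concave objective lies below a line through the candidate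
point `q` with slope `c θ h / (σ² (1 + h q / σ²)) - μ`. At the interior water level (`θ = 1`) and
at the kink `1 + h q / σ² = eᵗ` (`θ = μ σ² eᵗ / (c h)`) the slope vanishes; at `q = 0` it is
nonpositive, which suffices on `p ≥ 0`.
-/

open Real

noncomputable def tailObjective (h σ2 c mu t p : ℝ) : ℝ :=
  -mu * p - c * max (t - log (1 + h * p / σ2)) 0

theorem le_max_sub_log {t θ x y : ℝ} (hx : 0 < x) (hy : 0 < y) (hθ0 : 0 ≤ θ) (hθ1 : θ ≤ 1)
    (hθ : θ * (t - log y) = max (t - log y) 0) :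
    max (t - log y) 0 - θ * ((x - y) / y) ≤ max (t - log x) 0 := by
  have hlog : log x - log y ≤ (x - y) / y := by
    rw [sub_div, div_self hy.ne', ← log_div hx.ne' hy.ne']
    exact log_le_sub_one_of_pos (div_pos hx hy)
  calc max (t - log y) 0 - θ * ((x - y) / y) = θ * (t - log y - (x - y) / y) := by
        rw [← hθ]; ring
    _ ≤ θ * (t - log x) := mul_le_mul_of_nonneg_left (by linarith) hθ0
    _ ≤ θ * max (t - log x) 0 := by gcongr; exact le_max_left _ _
    _ ≤ max (t - log x) 0 := mul_le_of_le_one_left (le_max_right _ _) hθ1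

section tailObjective

variable {h σ2 c mu t p : ℝ}

theorem tailObjective_le_add {θ q : ℝ} (hc : 0 ≤ c) (hp : 0 < 1 + h * p / σ2)
    (hq : 0 < 1 + h * q / σ2) (hθ0 : 0 ≤ θ) (hθ1 : θ ≤ 1)
    (hθ : θ * (t - log (1 + h * q / σ2)) = max (t - log (1 + h * q / σ2)) 0) :
    tailObjective h σ2 c mu t p ≤
      tailObjective h σ2 c mu t q + (c * θ * h / (σ2 * (1 + h * q / σ2)) - mu) * (p - q) := by
  have hbound := mul_le_mul_of_nonneg_left (le_max_sub_log hp hq hθ0 hθ1 hθ) hc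
  have hslope : c * (θ * ((1 + h * p / σ2 - (1 + h * q / σ2)) / (1 + h * q / σ2))) =
      c * θ * h / (σ2 * (1 + h * q / σ2)) * (p - q) := by
    field_simp
    ring
  unfold tailObjective
  linarith

theorem tailObjective_le_zero (hc : 0 ≤ c) (hh : 0 < h) (hσ : 0 < σ2)
    (hslope : c * h ≤ mu * σ2) (hp : 0 ≤ p) :
    tailObjective h σ2 c mu t p ≤ tailObjective h σ2 c mu t 0 := by
  have hX : 0 < 1 + h * p / σ2 := by positivity
  have hX0 : 1 + h * 0 / σ2 = 1 := by simp
  obtain ⟨θ, hθ0, hθ1, hθ⟩ : ∃ θ : ℝ, 0 ≤ θ ∧ θ ≤ 1 ∧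
      θ * (t - log (1 + h * 0 / σ2)) = max (t - log (1 + h * 0 / σ2)) 0 := by
    rw [hX0, log_one, sub_zero]
    rcases le_total 0 t with ht | ht
    · exact ⟨1, zero_le_one, le_rfl, by rw [one_mul, max_eq_left ht]⟩
    · exact ⟨0, le_rfl, zero_le_one, by rw [zero_mul, max_eq_right ht]⟩
  have hneg : (c * θ * h / (σ2 * (1 + h * 0 / σ2)) - mu) * (p - 0) ≤ 0 := by
    rw [hX0, mul_one, sub_zero]
    refine mul_nonpos_of_nonpos_of_nonneg ?_ hp
    rw [sub_nonpos, div_le_iff₀ hσ]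
    nlinarith [mul_le_mul_of_nonneg_left hθ1 (mul_nonneg hc hh.le)]
  linarith [tailObjective_le_add (mu := mu) hc hX (by rw [hX0]; exact one_pos) hθ0 hθ1 hθ]

theorem tailObjective_le_waterLevel (hc : 0 < c) (hh : 0 < h) (hσ : 0 < σ2) (hmu : 0 < mu)
    (hlevel : c * h ≤ mu * σ2 * exp t) (hp : 0 < 1 + h * p / σ2) :
    tailObjective h σ2 c mu t p ≤ tailObjective h σ2 c mu t (c / mu - σ2 / h) := by
  have hX : 1 + h * (c / mu - σ2 / h) / σ2 = c * h / (mu * σ2) := by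
    field_simp
    ring
  have hlog : log (c * h / (mu * σ2)) ≤ t := by
    rw [log_le_iff_le_exp (by positivity), div_le_iff₀ (by positivity)]
    linarith
  have hθ : 1 * (t - log (1 + h * (c / mu - σ2 / h) / σ2)) =
      max (t - log (1 + h * (c / mu - σ2 / h) / σ2)) 0 := by
    rw [hX, one_mul, max_eq_left (by linarith)]
  have hflat : c * 1 * h / (σ2 * (1 + h * (c / mu - σ2 / h) / σ2)) - mu = 0 := by
    rw [hX]
    field_simp
    ring
  have := tailObjective_le_add (mu := mu) hc.le hp (by rw [hX]; positivity) zero_le_one le_rfl hθ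
  rwa [hflat, zero_mul, add_zero] at this

theorem tailObjective_le_kink (hc : 0 < c) (hh : 0 < h) (hσ : 0 < σ2) (hmu : 0 ≤ mu)
    (hkink : mu * σ2 * exp t ≤ c * h) (hp : 0 < 1 + h * p / σ2) :
    tailObjective h σ2 c mu t p ≤ tailObjective h σ2 c mu t (σ2 * (exp t - 1) / h) := by
  have hX : 1 + h * (σ2 * (exp t - 1) / h) / σ2 = exp t := by
    field_simp
    ring
  set θ : ℝ := mu * σ2 * exp t / (c * h) with hθdef
  have hθ1 : θ ≤ 1 := (div_le_one (by positivity)).mpr hkink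
  have hθ : θ * (t - log (1 + h * (σ2 * (exp t - 1) / h) / σ2)) =
      max (t - log (1 + h * (σ2 * (exp t - 1) / h) / σ2)) 0 := by
    rw [hX, log_exp, sub_self, mul_zero, max_self]
  have hflat : c * θ * h / (σ2 * (1 + h * (σ2 * (exp t - 1) / h) / σ2)) - mu = 0 := by
    rw [hX, hθdef]
    field_simp
    ring
  have := tailObjective_le_add (mu := mu) hc.le hp (by rw [hX]; positivity) (by positivity) hθ1 hθ
  rwa [hflat, zero_mul, add_zero] at this

end tailObjective

theorem tail_waterfilling_optimal_general (h σ2 lam mu α t : ℝ)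
    (hh : 0 < h) (hσ : 0 < σ2) (hlam : 0 < lam) (hmu : 0 < mu)
    (hα : 0 < α) :
    (∀ F : ℝ → ℝ,
      (F = fun p => -mu * p - (lam / α) * max (t - Real.log (1 + h * p / σ2)) 0) →
      ((lam / (mu * α * Real.exp t) - σ2 / h < 0 →
          ∀ p, 0 ≤ p → F p ≤ F (max (lam / (mu * α) - σ2 / h) 0)) ∧
       (0 ≤ lam / (mu * α * Real.exp t) - σ2 / h →
          ∀ p, 0 ≤ p → F p ≤ F (σ2 * (Real.exp t - 1) / h)))) := by
  rintro F rfl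
  have hc : 0 < lam / α := div_pos hlam hα
  have hlam_div : lam / (mu * α) = lam / α / mu := by rw [div_div, mul_comm]
  refine ⟨fun hcond p hp => ?_, fun hcond p hp => ?_⟩
  · rw [sub_neg, div_lt_div_iff₀ (by positivity) hh] at hcond
    have hlevel : lam / α * h ≤ mu * σ2 * exp t := by
      rw [div_mul_eq_mul_div, div_le_iff₀ hα]; linarith
    rcases le_total (lam / (mu * α) - σ2 / h) 0 with hzero | hpos
    · rw [max_eq_right hzero]
      rw [sub_nonpos, div_le_div_iff₀ (by positivity) hh] at hzero
      refine tailObjective_le_zero hc.le hh hσ ?_ hp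
      rw [div_mul_eq_mul_div, div_le_iff₀ hα]; linarith
    · rw [max_eq_left hpos, hlam_div]
      exact tailObjective_le_waterLevel hc hh hσ hmu hlevel (by positivity)
  · rw [sub_nonneg, div_le_div_iff₀ hh (by positivity)] at hcond
    refine tailObjective_le_kink hc hh hσ hmu.le ?_ (by positivity)
    rw [div_mul_eq_mul_div, le_div_iff₀ hα]; linarith

theorem tail_waterfilling_optimal (h σ2 lam mu α t : ℝ)
    (hh : 0 < h) (hσ : 0 < σ2) (hlam : 0 < lam) (hmu : 0 < mu)
    (hα : 0 < α) (hα1 : α ≤ 1) :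
    (∀ F : ℝ → ℝ,
      (F = fun p => -mu * p - (lam / α) * max (t - Real.log (1 + h * p / σ2)) 0) →
      ((lam / (mu * α * Real.exp t) - σ2 / h < 0 →
          ∀ p, 0 ≤ p → F p ≤ F (max (lam / (mu * α) - σ2 / h) 0)) ∧
       (0 ≤ lam / (mu * α * Real.exp t) - σ2 / h →
          ∀ p, 0 ≤ p → F p ≤ F (σ2 * (Real.exp t - 1) / h)))) :=
  tail_waterfilling_optimal_general h σ2 lam mu α t hh hσ hlam hmu hα
end

section
/- For λ, μ > 0, h > 0, σ² > 0, α ∈ (0,1], if λ/(μα) − σ²/h ≤ 0, then p = 0 maximizes F(p) = −μ·p − (λ/α)·( t − log(1 + h·p/σ²) )₊ over p ≥ 0, for any t ∈ ℝ. -/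
/-!
Raising the power from `0` to `p` lowers the shortfall `(t - log (1 + h p / σ²))₊` by at most
`log (1 + h p / σ²) ≤ h p / σ²`, since `x ↦ x₊` is 1-Lipschitz; the penalty term therefore gains at
most `(λ / α) (h / σ²) p`, which the threshold condition bounds by the power cost `μ p`.
-/

open Real

lemma max_sub_max_sub_log_one_add_le (t : ℝ) {x : ℝ} (hx : 0 ≤ x) :
    max t 0 - max (t - log (1 + x)) 0 ≤ x := by
  have hlog : 0 ≤ log (1 + x) := log_nonneg (by linarith)
  calc max t 0 - max (t - log (1 + x)) 0
      ≤ |t - (t - log (1 + x))| := (abs_max_sub_max_le_abs _ _ _).trans' (le_abs_self _)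
    _ = log (1 + x) := by rw [sub_sub_cancel, abs_of_nonneg hlog]
    _ ≤ x := by linarith [log_le_sub_one_of_pos (x := 1 + x) (by linarith)]

lemma div_mul_div_le_of_div_le_div {lam mu α h σ2 : ℝ} (hh : 0 < h) (hσ : 0 < σ2)
    (hmu : 0 < mu) (hα : 0 < α) (hcond : lam / (mu * α) ≤ σ2 / h) :
    lam / α * (h / σ2) ≤ mu := by
  rw [div_le_div_iff₀ (by positivity) hh] at hcond
  rw [div_mul_div_comm, div_le_iff₀ (by positivity)]
  linarith

theorem no_transmission_regime_general (h σ2 lam mu α : ℝ)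
    (hh : 0 < h) (hσ : 0 < σ2) (hlam : 0 < lam) (hmu : 0 < mu)
    (hα : 0 < α)
    (hcond : lam / (mu * α) - σ2 / h ≤ 0) :
    ∀ t : ℝ, ∀ p, 0 ≤ p →
      -mu * p - (lam / α) * max (t - Real.log (1 + h * p / σ2)) 0 ≤
      -mu * 0 - (lam / α) * max (t - Real.log (1 + h * 0 / σ2)) 0 := by
  intro t p hp
  have hcoef : lam / α * (h / σ2) ≤ mu :=
    div_mul_div_le_of_div_le_div hh hσ hmu hα (sub_nonpos.mp hcond)
  have hgain : lam / α * (max t 0 - max (t - log (1 + h * p / σ2)) 0) ≤ mu * p :=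
    calc lam / α * (max t 0 - max (t - log (1 + h * p / σ2)) 0)
        ≤ lam / α * (h * p / σ2) :=
          mul_le_mul_of_nonneg_left (max_sub_max_sub_log_one_add_le t (by positivity))
            (by positivity)
      _ = lam / α * (h / σ2) * p := by ring
      _ ≤ mu * p := mul_le_mul_of_nonneg_right hcoef hp
  simp only [mul_zero, zero_div, add_zero, log_one, sub_zero, zero_sub]
  linarith

theorem no_transmission_regime (h σ2 lam mu α : ℝ)
    (hh : 0 < h) (hσ : 0 < σ2) (hlam : 0 < lam) (hmu : 0 < mu)
    (hα : 0 < α) (hα1 : α ≤ 1)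
    (hcond : lam / (mu * α) - σ2 / h ≤ 0) :
    ∀ t : ℝ, ∀ p, 0 ≤ p →
      -mu * p - (lam / α) * max (t - Real.log (1 + h * p / σ2)) 0 ≤
      -mu * 0 - (lam / α) * max (t - Real.log (1 + h * 0 / σ2)) 0 :=
  no_transmission_regime_general h σ2 lam mu α hh hσ hlam hmu hα hcond
end
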